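/- arXiv:2007.03917 — 2 statements merged into one kernel-verified Lean document; each statement's English description precedes it below -/
import Mathlib

section
/- The Verma module V_{j,Δ} over A_k is a simple A_k-module if and only if h_k^n(j, Δ) ≠ 0 for every integer n ≥ 1. If h_k^n(j, Δ) = 0 for some n ≥ 1 and N is the minimal such n, then the submodule of V_{j,Δ} generated by (G⁻)^N v is isomorphic to V_{j−N,Δ}, it is the unique maximal proper submodule, and the simple quotient L_{j,Δ} = V_{j,Δ}/V_{j−N,Δ} has dimension N over ℂ. -/
noncomputable section

namespace BP

/-- The free `ℂ`-algebra on four generators `J, G⁺, G⁻, L`. -/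
abbrev F : Type := FreeAlgebra ℂ (Fin 4)

def jF : F := FreeAlgebra.ι ℂ 0
def gpF : F := FreeAlgebra.ι ℂ 1
def gmF : F := FreeAlgebra.ι ℂ 2
def lF : F := FreeAlgebra.ι ℂ 3

/-- `f_k(J, L) = 3J² − (k+3)L − (1/8)(k+1)(2k+3)·1`, as an element of the free algebra. -/
def fF (k : ℂ) : F :=
  3 * jF ^ 2 - algebraMap ℂ F (k + 3) * lF - algebraMap ℂ F (1/8 * (k + 1) * (2*k + 3))

/-- The defining relations of `A_k`: `L` is central, `[J,G⁺] = G⁺`, `[J,G⁻] = −G⁻`,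
`[G⁺,G⁻] = f_k(J,L)`. -/
inductive Rel (k : ℂ) : F → F → Prop
  | lj : Rel k (lF * jF) (jF * lF)
  | lgp : Rel k (lF * gpF) (gpF * lF)
  | lgm : Rel k (lF * gmF) (gmF * lF)
  | jgp : Rel k (jF * gpF - gpF * jF) gpF
  | jgm : Rel k (jF * gmF - gmF * jF) (-gmF)
  | gpgm : Rel k (gpF * gmF - gmF * gpF) (fF k)

/-- The unital associative `ℂ`-algebra `A_k`: the quotient of the free algebra on
`J, G⁺, G⁻, L` by the two-sided ideal generated by the defining relations. -/
def A (k : ℂ) : Type := RingQuot (Rel k)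

instance (k : ℂ) : Ring (A k) := inferInstanceAs (Ring (RingQuot (Rel k)))
instance (k : ℂ) : Algebra ℂ (A k) := inferInstanceAs (Algebra ℂ (RingQuot (Rel k)))

/-- The quotient map `F →ₐ[ℂ] A_k`. -/
def mk (k : ℂ) : F →ₐ[ℂ] A k := RingQuot.mkAlgHom ℂ (Rel k)

/-- The generator `J` of `A_k`. -/
def J (k : ℂ) : A k := mk k jF
/-- The generator `G⁺` of `A_k`. -/
def Gp (k : ℂ) : A k := mk k gpF
/-- The generator `G⁻` of `A_k`. -/
def Gm (k : ℂ) : A k := mk k gmF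
/-- The generator `L` of `A_k`. -/
def L (k : ℂ) : A k := mk k lF

/-- `f_k(x, y)` as a complex-valued function. -/
def fC (k x y : ℂ) : ℂ := 3 * x ^ 2 - (k + 3) * y - 1/8 * (k + 1) * (2*k + 3)

/-- `h_k^n(j, Δ) = Σ_{m=0}^{n−1} f_k(j−m, Δ)`. -/
def hC (k : ℂ) (n : ℕ) (j Δ : ℂ) : ℂ := ∑ m ∈ Finset.range n, fC k (j - m) Δ

/-- The left ideal of `A_k` by which one quotients to obtain the Verma module `V_{j,Δ}`:
it is generated by `G⁺`, `J − j·1` and `L − Δ·1`.  (The Verma module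
`A_k ⊗_{A_k^≥} ℂ_{j,Δ}` is canonically the quotient of `A_k` by this left ideal.) -/
def vermaIdeal (k j Δ : ℂ) : Submodule (A k) (A k) :=
  Submodule.span (A k)
    {Gp k, J k - algebraMap ℂ (A k) j, L k - algebraMap ℂ (A k) Δ}

/-- The Verma module `V_{j,Δ} = A_k ⊗_{A_k^≥} ℂ_{j,Δ}`, realised as `A_k / A_k·(G⁺, J−j, L−Δ)`. -/
abbrev Verma (k j Δ : ℂ) : Type := A k ⧸ vermaIdeal k j Δ

/-- The highest-weight vector `v = 1 ⊗ v` of the Verma module `V_{j,Δ}`. -/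
def hwv (k j Δ : ℂ) : Verma k j Δ := Submodule.Quotient.mk (1 : A k)

/-- The dimension of an `A_k`-module over `ℂ` (the `ℂ`-action being obtained by restricting
the `A_k`-action along `algebraMap ℂ (A k)`). -/
def rankOverC (k : ℂ) (M : Type) [AddCommGroup M] [Module (A k) M] : Cardinal :=
  letI : Module ℂ M := Module.compHom M (algebraMap ℂ (A k))
  Module.rank ℂ M


/-!
The weight of `(G⁻)ⁿ v` under `J` is `j - n`, and `G⁺ (G⁻)ⁿ⁺¹ v = h_k^{n+1}(j, Δ) (G⁻)ⁿ v`. A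
faithful model of `V_{j,Δ}` on `ℕ →₀ ℂ` shows that the vectors `(G⁻)ⁿ v` form a basis. Since
their weights are distinct, every submodule is spanned by the basis vectors it contains, and by
the formula for `G⁺` a submodule containing `(G⁻)ᵐ v` contains `v` as soon as
`h_k^n(j, Δ) ≠ 0` for `1 ≤ n ≤ m`. If `N` is the first zero of `h_k^n`, the vector `(G⁻)^N v`
is again a highest-weight vector, of weight `j - N`; it generates the span of the `(G⁻)ⁿ v` with
`n ≥ N`, which is then the largest proper submodule, of codimension `N`.
-/

open Polynomial

lemma aeval_smul_eq_eval_smul {R M : Type*} [Ring R] [Algebra ℂ R] [AddCommGroup M] [Module ℂ M]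
    [Module R M] [IsScalarTower ℂ R M] {a : R} {w : M} {μ : ℂ} (h : a • w = μ • w) (q : ℂ[X]) :
    aeval a q • w = q.eval μ • w := by
  induction q using Polynomial.induction_on with
  | C c => rw [aeval_C, algebraMap_smul, eval_C]
  | add p q hp hq => rw [map_add, add_smul, hp, hq, eval_add, add_smul]
  | monomial n c ih =>
    rw [pow_succ, ← mul_assoc, map_mul, aeval_X, mul_smul, h, smul_comm, ih, smul_smul]
    simp only [eval_mul, eval_X, mul_comm]

@[simp] lemma hC_zero (k j Δ : ℂ) : hC k 0 j Δ = 0 := by simp [hC]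

lemma hC_succ (k j Δ : ℂ) (n : ℕ) : hC k (n + 1) j Δ = hC k n j Δ + fC k (j - n) Δ := by
  simp [hC, Finset.sum_range_succ]

section Relations

variable (k : ℂ)

lemma mk_eq_mk_of_rel {a b : F} (h : Rel k a b) : mk k a = mk k b :=
  RingQuot.mkAlgHom_rel ℂ h

lemma L_mul_Gm : L k * Gm k = Gm k * L k := by
  unfold L Gm
  simpa only [map_mul] using mk_eq_mk_of_rel k Rel.lgm

lemma J_mul_Gm : J k * Gm k = Gm k * J k - Gm k := by
  have h := mk_eq_mk_of_rel k Rel.jgm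
  rw [map_sub, map_mul, map_mul, map_neg, sub_eq_iff_eq_add] at h
  exact h.trans (neg_add_eq_sub _ _)

lemma Gp_mul_Gm : Gp k * Gm k = Gm k * Gp k + mk k (fF k) := by
  have h := mk_eq_mk_of_rel k Rel.gpgm
  rw [map_sub, map_mul, map_mul, sub_eq_iff_eq_add] at h
  exact h.trans (add_comm _ _)

lemma mk_fF : mk k (fF k) = 3 * J k ^ 2 - algebraMap ℂ (A k) (k + 3) * L k
    - algebraMap ℂ (A k) (1/8 * (k + 1) * (2*k + 3)) := by
  simp only [fF, map_sub, map_mul, map_pow, map_ofNat, AlgHom.commutes]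
  rfl

end Relations

section Action

variable {k : ℂ} {M : Type*} [AddCommGroup M] [Module ℂ M] [Module (A k) M]
  [IsScalarTower ℂ (A k) M]

lemma mk_fF_smul {w : M} {μ Δ : ℂ}
    (hJ : J k • w = μ • w) (hL : L k • w = Δ • w) : mk k (fF k) • w = fC k μ Δ • w := by
  have h3 : (3 : A k) = algebraMap ℂ (A k) 3 := (map_ofNat _ 3).symm
  rw [mk_fF, h3, sub_smul, sub_smul, mul_smul, mul_smul, pow_two, mul_smul, hJ, smul_comm (J k) μ w,
    hJ, hL, algebraMap_smul, algebraMap_smul, algebraMap_smul, smul_smul, smul_smul, smul_smul,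
    ← sub_smul, ← sub_smul, fC]
  ring_nf

lemma smul_mem_of_generators_smul_mem (S : Submodule ℂ M)
    (hJ : ∀ x ∈ S, J k • x ∈ S) (hGp : ∀ x ∈ S, Gp k • x ∈ S)
    (hGm : ∀ x ∈ S, Gm k • x ∈ S) (hL : ∀ x ∈ S, L k • x ∈ S)
    (a : A k) {x : M} (hx : x ∈ S) : a • x ∈ S := by
  obtain ⟨b, rfl⟩ : ∃ b, mk k b = a := RingQuot.mkAlgHom_surjective ℂ (Rel k) a
  induction b using FreeAlgebra.induction generalizing x with
  | grade0 c => rw [AlgHom.commutes, algebraMap_smul]; exact S.smul_mem c hx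
  | grade1 i =>
    fin_cases i
    exacts [hJ x hx, hGp x hx, hGm x hx, hL x hx]
  | mul a b ha hb => rw [map_mul, mul_smul]; exact ha (hb hx)
  | add a b ha hb => rw [map_add, add_smul]; exact S.add_mem (ha hx) (hb hx)

end Action

structure IsHighestWeightVector (k j Δ : ℂ) {M : Type*} [AddCommGroup M] [Module ℂ M]
    [Module (A k) M] (v : M) : Prop where
  J_smul : J k • v = j • v
  L_smul : L k • v = Δ • v
  Gp_smul : Gp k • v = 0

namespace IsHighestWeightVector

variable {k j Δ : ℂ} {M : Type*} [AddCommGroup M] [Module ℂ M] [Module (A k) M]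
  [IsScalarTower ℂ (A k) M] {v : M}

theorem J_smul_Gm_pow (hv : IsHighestWeightVector k j Δ v) (n : ℕ) :
    J k • Gm k ^ n • v = (j - n) • Gm k ^ n • v := by
  induction n with
  | zero => simpa using hv.J_smul
  | succ n ih =>
    rw [pow_succ', mul_smul, ← mul_smul (J k), J_mul_Gm, sub_smul, mul_smul, ih, smul_comm,
      Nat.cast_succ, sub_add_eq_sub_sub, sub_smul (j - n), one_smul]

theorem L_smul_Gm_pow (hv : IsHighestWeightVector k j Δ v) (n : ℕ) :
    L k • Gm k ^ n • v = Δ • Gm k ^ n • v := by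
  induction n with
  | zero => simpa using hv.L_smul
  | succ n ih => rw [pow_succ', mul_smul, ← mul_smul (L k), L_mul_Gm, mul_smul, ih, smul_comm]

theorem Gp_smul_Gm_pow_succ (hv : IsHighestWeightVector k j Δ v) (n : ℕ) :
    Gp k • Gm k ^ (n + 1) • v = hC k (n + 1) j Δ • Gm k ^ n • v := by
  have step : ∀ m : ℕ, Gp k • Gm k ^ (m + 1) • v =
      Gm k • Gp k • Gm k ^ m • v + fC k (j - m) Δ • Gm k ^ m • v := fun m => by
    rw [pow_succ', mul_smul, ← mul_smul (Gp k), Gp_mul_Gm, add_smul, mul_smul,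
      mk_fF_smul (hv.J_smul_Gm_pow m) (hv.L_smul_Gm_pow m)]
  induction n with
  | zero => rw [step]; simp [hv.Gp_smul, hC_succ]
  | succ n ih =>
    rw [step, ih, smul_comm, ← mul_smul, ← pow_succ', ← add_smul, hC_succ (n := n + 1)]

theorem Gm_pow_smul {N : ℕ} (hv : IsHighestWeightVector k j Δ v) (hN : hC k N j Δ = 0) :
    IsHighestWeightVector k (j - N) Δ (Gm k ^ N • v) where
  J_smul := hv.J_smul_Gm_pow N
  L_smul := hv.L_smul_Gm_pow N
  Gp_smul := by
    cases N with
    | zero => simpa using hv.Gp_smul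
    | succ N => rw [hv.Gp_smul_Gm_pow_succ, hN, zero_smul]

theorem aeval_J_smul_Gm_pow (hv : IsHighestWeightVector k j Δ v) (q : ℂ[X]) (n : ℕ) :
    aeval (J k) q • Gm k ^ n • v = q.eval (j - n) • Gm k ^ n • v :=
  aeval_smul_eq_eval_smul (hv.J_smul_Gm_pow n) q

theorem Gm_pow_smul_mem_of_linearCombination_mem (hv : IsHighestWeightVector k j Δ v)
    (W : Submodule (A k) M) {c : ℕ →₀ ℂ}
    (hc : Finsupp.linearCombination ℂ (fun n => Gm k ^ n • v) c ∈ W) {m : ℕ} (hm : c m ≠ 0) :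
    Gm k ^ m • v ∈ W := by
  classical
  -- `q(J)` kills the other vectors of the combination, whose weights `j - i` are roots of `q`.
  set q : ℂ[X] := ∏ i ∈ c.support.erase m, (X - C (j - i))
  have hq : ∀ n : ℕ, q.eval (j - n) = ∏ i ∈ c.support.erase m, ((i : ℂ) - n) := fun n => by
    simp only [q, eval_prod, eval_sub, eval_X, eval_C, sub_sub_sub_cancel_left]
  have hqm : q.eval (j - m) ≠ 0 := by
    rw [hq, Finset.prod_ne_zero_iff]
    intro i hi
    exact sub_ne_zero.mpr (Nat.cast_injective.ne (Finset.ne_of_mem_erase hi))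
  have key : aeval (J k) q • Finsupp.linearCombination ℂ (fun n => Gm k ^ n • v) c =
      (c m * q.eval (j - m)) • Gm k ^ m • v := by
    rw [Finsupp.linearCombination_apply, Finsupp.sum, Finset.smul_sum, Finset.sum_eq_single m]
    · rw [smul_comm, hv.aeval_J_smul_Gm_pow, smul_smul, mul_comm]
    · intro n hn hnm
      rw [smul_comm, hv.aeval_J_smul_Gm_pow, hq,
        Finset.prod_eq_zero (Finset.mem_erase.mpr ⟨hnm, hn⟩) (sub_self _), zero_smul, smul_zero]
    · intro hm'
      exact absurd (Finsupp.notMem_support_iff.mp hm') hm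
  have h := W.smul_mem (aeval (J k) q) hc
  rw [key] at h
  exact (Submodule.smul_mem_iff (W.restrictScalars ℂ) (mul_ne_zero hm hqm)).mp h

theorem mem_of_Gm_pow_smul_mem (hv : IsHighestWeightVector k j Δ v) (W : Submodule (A k) M) {m : ℕ}
    (hm : Gm k ^ m • v ∈ W) (hne : ∀ n, 1 ≤ n → n ≤ m → hC k n j Δ ≠ 0) : v ∈ W := by
  induction m with
  | zero => simpa using hm
  | succ m ih =>
    refine ih ?_ fun n h1 h2 => hne n h1 (h2.trans m.le_succ)
    have h := W.smul_mem (Gp k) hm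
    rw [hv.Gp_smul_Gm_pow_succ] at h
    exact (Submodule.smul_mem_iff (W.restrictScalars ℂ) (hne _ le_add_self le_rfl)).mp h

theorem restrictScalars_span_singleton (hv : IsHighestWeightVector k j Δ v) :
    (Submodule.span (A k) {v}).restrictScalars ℂ =
      Submodule.span ℂ (Set.range fun n : ℕ => Gm k ^ n • v) := by
  set S := Submodule.span ℂ (Set.range fun n : ℕ => Gm k ^ n • v)
  have hS : ∀ n, Gm k ^ n • v ∈ S := fun n => Submodule.subset_span ⟨n, rfl⟩
  have stable : ∀ g : A k, (∀ n, g • Gm k ^ n • v ∈ S) → ∀ x ∈ S, g • x ∈ S := fun g hg =>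
    Submodule.span_le (p := S.comap (DistribSMul.toLinearMap ℂ M g)).mpr
      (Set.range_subset_iff.mpr hg)
  let S' : Submodule (A k) M :=
    { S with
      smul_mem' := fun a _ hx => smul_mem_of_generators_smul_mem S
        (stable _ fun n => by rw [hv.J_smul_Gm_pow]; exact S.smul_mem _ (hS n))
        (stable _ fun n => by
          cases n with
          | zero => rw [pow_zero, one_smul, hv.Gp_smul]; exact S.zero_mem
          | succ n => rw [hv.Gp_smul_Gm_pow_succ]; exact S.smul_mem _ (hS n))
        (stable _ fun n => by rw [← mul_smul, ← pow_succ']; exact hS (n + 1))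
        (stable _ fun n => by rw [hv.L_smul_Gm_pow]; exact S.smul_mem _ (hS n))
        a hx }
  refine le_antisymm (Submodule.span_le (p := S').mpr ?_) (Submodule.span_le.mpr ?_)
  · exact Set.singleton_subset_iff.mpr (show v ∈ S by simpa using hS 0)
  · exact Set.range_subset_iff.mpr fun n =>
      Submodule.smul_mem _ _ (Submodule.mem_span_singleton_self v)

end IsHighestWeightVector

section Verma

variable {k j Δ : ℂ}

lemma smul_hwv (a : A k) : a • hwv k j Δ = Submodule.Quotient.mk a := by
  rw [hwv, ← Submodule.Quotient.mk_smul, smul_eq_mul, mul_one]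

lemma isHighestWeightVector_hwv : IsHighestWeightVector k j Δ (hwv k j Δ) := by
  have h : ∀ a ∈ ({Gp k, J k - algebraMap ℂ (A k) j, L k - algebraMap ℂ (A k) Δ} : Set (A k)),
      a • hwv k j Δ = 0 := fun a ha => by
    rw [smul_hwv, Submodule.Quotient.mk_eq_zero]
    exact Submodule.subset_span ha
  refine ⟨?_, ?_, h _ (by simp)⟩
  · simpa [sub_smul, sub_eq_zero] using h (J k - algebraMap ℂ (A k) j) (by simp)
  · simpa [sub_smul, sub_eq_zero] using h (L k - algebraMap ℂ (A k) Δ) (by simp)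

lemma span_hwv : Submodule.span (A k) {hwv k j Δ} = ⊤ := by
  refine eq_top_iff.mpr fun x _ => ?_
  obtain ⟨a, rfl⟩ := Submodule.Quotient.mk_surjective _ x
  rw [← smul_hwv]
  exact Submodule.smul_mem _ a (Submodule.mem_span_singleton_self _)

lemma span_Gm_pow_hwv :
    Submodule.span ℂ (Set.range fun n : ℕ => Gm k ^ n • hwv k j Δ) = ⊤ := by
  rw [← isHighestWeightVector_hwv.restrictScalars_span_singleton, span_hwv,
    Submodule.restrictScalars_top]

variable {M : Type*} [AddCommGroup M] [Module ℂ M] [Module (A k) M] [IsScalarTower ℂ (A k) M]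
  {v : M}

def vermaLift (hv : IsHighestWeightVector k j Δ v) : Verma k j Δ →ₗ[A k] M :=
  (vermaIdeal k j Δ).liftQ (LinearMap.toSpanSingleton (A k) M v) <| by
    rw [vermaIdeal, Submodule.span_le]
    rintro a (rfl | rfl | rfl) <;>
      simp [sub_smul, hv.J_smul, hv.L_smul, hv.Gp_smul]

lemma vermaLift_smul_hwv (hv : IsHighestWeightVector k j Δ v) (a : A k) :
    vermaLift hv (a • hwv k j Δ) = a • v := by
  rw [smul_hwv, vermaLift, Submodule.liftQ_apply, LinearMap.toSpanSingleton_apply]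

lemma range_vermaLift (hv : IsHighestWeightVector k j Δ v) :
    LinearMap.range (vermaLift hv) = Submodule.span (A k) {v} := by
  rw [vermaLift, Submodule.range_liftQ, LinearMap.span_singleton_eq_range]

end Verma

section Model

variable (k j Δ : ℂ)

def modelJ : Module.End ℂ (ℕ →₀ ℂ) := Finsupp.lsum ℂ fun n => (j - n) • Finsupp.lsingle n

-- `n - 1` truncates at `n = 0`, where the coefficient `hC k 0 j Δ` vanishes anyway.
def modelGp : Module.End ℂ (ℕ →₀ ℂ) :=
  Finsupp.lsum ℂ fun n => hC k n j Δ • Finsupp.lsingle (n - 1)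

def modelGm : Module.End ℂ (ℕ →₀ ℂ) := Finsupp.lsum ℂ fun n => Finsupp.lsingle (n + 1)

variable {k j Δ}

lemma modelJ_single (n : ℕ) (c : ℂ) :
    modelJ j (Finsupp.single n c) = Finsupp.single n ((j - n) * c) := by
  simp [modelJ]

lemma modelGp_single (n : ℕ) (c : ℂ) :
    modelGp k j Δ (Finsupp.single n c) = Finsupp.single (n - 1) (hC k n j Δ * c) := by
  simp [modelGp]

lemma modelGm_single (n : ℕ) (c : ℂ) :
    modelGm (Finsupp.single n c) = Finsupp.single (n + 1) c := by
  simp [modelGm]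

lemma modelJ_mul_modelGp_sub :
    modelJ j * modelGp k j Δ - modelGp k j Δ * modelJ j = modelGp k j Δ := by
  refine Finsupp.lhom_ext fun n c => ?_
  simp only [LinearMap.sub_apply, Module.End.mul_apply, modelJ_single, modelGp_single,
    ← Finsupp.single_sub]
  cases n with
  | zero => simp
  | succ n => congr 1; push_cast; ring

lemma modelJ_mul_modelGm_sub : modelJ j * modelGm - modelGm * modelJ j = -modelGm := by
  refine Finsupp.lhom_ext fun n c => ?_
  simp only [LinearMap.sub_apply, LinearMap.neg_apply, Module.End.mul_apply, modelJ_single,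
    modelGm_single, ← Finsupp.single_sub, ← Finsupp.single_neg]
  congr 1; push_cast; ring

lemma modelGp_mul_modelGm_sub : modelGp k j Δ * modelGm - modelGm * modelGp k j Δ =
    3 * modelJ j ^ 2 - algebraMap ℂ _ (k + 3) * algebraMap ℂ _ Δ
      - algebraMap ℂ _ (1/8 * (k + 1) * (2*k + 3)) := by
  refine Finsupp.lhom_ext fun n c => ?_
  have hn : Finsupp.single (n - 1 + 1) (hC k n j Δ * c) = Finsupp.single n (hC k n j Δ * c) := by
    cases n <;> simp
  rw [← map_ofNat (algebraMap ℂ (Module.End ℂ (ℕ →₀ ℂ))) 3]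
  simp only [LinearMap.sub_apply, Module.End.mul_apply, Module.algebraMap_end_apply, pow_two,
    modelJ_single, modelGp_single, modelGm_single, Nat.add_sub_cancel, Finsupp.smul_single, hn,
    ← Finsupp.single_sub, hC_succ, fC, smul_eq_mul]
  congr 1
  ring

variable (k j Δ)

def modelGen : Fin 4 → Module.End ℂ (ℕ →₀ ℂ) :=
  ![modelJ j, modelGp k j Δ, modelGm, algebraMap ℂ _ Δ]

lemma lift_modelGen_rel ⦃a b : F⦄ (h : Rel k a b) :
    FreeAlgebra.lift ℂ (modelGen k j Δ) a = FreeAlgebra.lift ℂ (modelGen k j Δ) b := by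
  cases h <;>
    simp only [jF, gpF, gmF, lF, fF, map_mul, map_sub, map_neg, map_pow, map_ofNat,
      AlgHom.commutes, FreeAlgebra.lift_ι_apply, modelGen, Matrix.cons_val]
  · exact Algebra.commutes Δ _
  · exact Algebra.commutes Δ _
  · exact Algebra.commutes Δ _
  · exact modelJ_mul_modelGp_sub
  · exact modelJ_mul_modelGm_sub
  · rw [modelGp_mul_modelGm_sub]; simp only [map_mul]

def modelRep : A k →ₐ[ℂ] Module.End ℂ (ℕ →₀ ℂ) :=
  RingQuot.liftAlgHom ℂ ⟨FreeAlgebra.lift ℂ (modelGen k j Δ), lift_modelGen_rel k j Δ⟩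

lemma modelRep_mk (x : F) : modelRep k j Δ (mk k x) = FreeAlgebra.lift ℂ (modelGen k j Δ) x :=
  RingQuot.liftAlgHom_mkAlgHom_apply ℂ _ _ x

lemma modelRep_J : modelRep k j Δ (J k) = modelJ j := by
  simp [J, jF, modelRep_mk, modelGen]

lemma modelRep_Gp : modelRep k j Δ (Gp k) = modelGp k j Δ := by
  simp [Gp, gpF, modelRep_mk, modelGen]

lemma modelRep_Gm : modelRep k j Δ (Gm k) = modelGm := by
  simp [Gm, gmF, modelRep_mk, modelGen]

lemma modelRep_L : modelRep k j Δ (L k) = algebraMap ℂ _ Δ := by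
  simp [L, lF, modelRep_mk, modelGen]

/-- `V_{j,Δ}` realised on `ℕ →₀ ℂ`, with `single n 1` standing for `(G⁻)ⁿ v`. -/
def VermaModel (_k _j _Δ : ℂ) : Type := ℕ →₀ ℂ

instance : AddCommGroup (VermaModel k j Δ) := inferInstanceAs (AddCommGroup (ℕ →₀ ℂ))

instance : Module ℂ (VermaModel k j Δ) := inferInstanceAs (Module ℂ (ℕ →₀ ℂ))

instance : Module (A k) (VermaModel k j Δ) := Module.compHom (ℕ →₀ ℂ) (modelRep k j Δ).toRingHom

instance : IsScalarTower ℂ (A k) (VermaModel k j Δ) :=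
  ⟨fun c a x => by
    change modelRep k j Δ (c • a) x = c • modelRep k j Δ a x
    rw [map_smul]
    rfl⟩

def modelHwv : VermaModel k j Δ := Finsupp.single 0 1

lemma isHighestWeightVector_modelHwv : IsHighestWeightVector k j Δ (modelHwv k j Δ) := by
  refine ⟨?_, ?_, ?_⟩
  · change modelRep k j Δ (J k) (Finsupp.single 0 1) = j • Finsupp.single 0 1
    rw [modelRep_J, modelJ_single, Nat.cast_zero, sub_zero, mul_one]
    exact (Finsupp.smul_single_one _ _).symm
  · change modelRep k j Δ (L k) (Finsupp.single 0 1) = Δ • Finsupp.single 0 1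
    rw [modelRep_L, Module.algebraMap_end_apply]
    rfl
  · change modelRep k j Δ (Gp k) (Finsupp.single 0 1) = 0
    simp [modelRep_Gp, modelGp_single]

lemma Gm_pow_smul_modelHwv (n : ℕ) :
    Gm k ^ n • modelHwv k j Δ = (Finsupp.single n 1 : ℕ →₀ ℂ) := by
  induction n with
  | zero => rw [pow_zero, one_smul]; rfl
  | succ n ih =>
    rw [pow_succ', mul_smul, ih]
    change modelRep k j Δ (Gm k) (Finsupp.single n 1) = _
    rw [modelRep_Gm, modelGm_single]

end Model

section Structure

variable {k j Δ : ℂ}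

theorem linearIndependent_Gm_pow_hwv :
    LinearIndependent ℂ (fun n : ℕ => Gm k ^ n • hwv k j Δ) := by
  refine LinearIndependent.of_comp
    ((vermaLift (isHighestWeightVector_modelHwv k j Δ)).restrictScalars ℂ) ?_
  have h : (vermaLift (isHighestWeightVector_modelHwv k j Δ)).restrictScalars ℂ ∘
      (fun n : ℕ => Gm k ^ n • hwv k j Δ) = fun n => Finsupp.single n (1 : ℂ) := by
    funext n
    simp only [Function.comp_apply, LinearMap.restrictScalars_apply, vermaLift_smul_hwv,
      Gm_pow_smul_modelHwv]
    rfl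
  rw [h]
  exact Finsupp.basisSingleOne.linearIndependent

lemma eq_top_of_hwv_mem {W : Submodule (A k) (Verma k j Δ)} (h : hwv k j Δ ∈ W) : W = ⊤ := by
  rw [eq_top_iff, ← span_hwv, Submodule.span_le, Set.singleton_subset_iff]
  exact h

lemma exists_linearCombination_Gm_pow_hwv (x : Verma k j Δ) :
    ∃ c : ℕ →₀ ℂ, Finsupp.linearCombination ℂ (fun n => Gm k ^ n • hwv k j Δ) c = x := by
  rw [← LinearMap.mem_range, Finsupp.range_linearCombination, span_Gm_pow_hwv]
  trivial

lemma restrictScalars_span_Gm_pow_hwv {N : ℕ} (hN : hC k N j Δ = 0) :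
    (Submodule.span (A k) {Gm k ^ N • hwv k j Δ}).restrictScalars ℂ =
      Submodule.span ℂ ((fun n => Gm k ^ n • hwv k j Δ) '' Set.Ici N) := by
  rw [(isHighestWeightVector_hwv.Gm_pow_smul hN).restrictScalars_span_singleton]
  congr 1
  ext x
  simp only [Set.mem_range, Set.mem_image, Set.mem_Ici, ← mul_smul, ← pow_add]
  exact ⟨fun ⟨n, hn⟩ => ⟨n + N, le_add_self, hn⟩,
    fun ⟨m, hm, hx⟩ => ⟨m - N, by rwa [Nat.sub_add_cancel hm]⟩⟩

lemma span_Gm_pow_hwv_ne_top {N : ℕ} (hN1 : 1 ≤ N) (hN : hC k N j Δ = 0) :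
    Submodule.span (A k) {Gm k ^ N • hwv k j Δ} ≠ ⊤ := by
  intro h
  have h0 : (0 : ℕ) ∉ Set.Ici N := by simp; omega
  apply linearIndependent_Gm_pow_hwv.notMem_span_image h0
  rw [← restrictScalars_span_Gm_pow_hwv hN, h]
  trivial

lemma le_span_Gm_pow_hwv {N : ℕ} (hN : hC k N j Δ = 0)
    (hmin : ∀ n : ℕ, 1 ≤ n → n < N → hC k n j Δ ≠ 0)
    {W : Submodule (A k) (Verma k j Δ)} (hW : W ≠ ⊤) :
    W ≤ Submodule.span (A k) {Gm k ^ N • hwv k j Δ} := by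
  intro x hx
  obtain ⟨c, rfl⟩ := exists_linearCombination_Gm_pow_hwv x
  have hsupp : ∀ n ∈ c.support, n ∈ Set.Ici N := by
    intro n hn
    by_contra hlt
    have hnW := isHighestWeightVector_hwv.Gm_pow_smul_mem_of_linearCombination_mem W hx
      (Finsupp.mem_support_iff.mp hn)
    exact hW (eq_top_of_hwv_mem (isHighestWeightVector_hwv.mem_of_Gm_pow_smul_mem W hnW
      fun m h1 h2 => hmin m h1 (h2.trans_lt (not_le.mp hlt))))
  show _ ∈ (Submodule.span (A k) {Gm k ^ N • hwv k j Δ}).restrictScalars ℂ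
  rw [restrictScalars_span_Gm_pow_hwv hN]
  exact Finsupp.mem_span_image_iff_linearCombination ℂ |>.mpr ⟨c, hsupp, rfl⟩

theorem isSimpleModule_verma_iff :
    IsSimpleModule (A k) (Verma k j Δ) ↔ ∀ n : ℕ, 1 ≤ n → hC k n j Δ ≠ 0 := by
  constructor
  · intro hsimple n hn1 hn
    rcases IsSimpleOrder.eq_bot_or_eq_top (Submodule.span (A k) {Gm k ^ n • hwv k j Δ}) with h | h
    · exact linearIndependent_Gm_pow_hwv.ne_zero n (Submodule.span_singleton_eq_bot.mp h)
    · exact span_Gm_pow_hwv_ne_top hn1 hn h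
  · intro H
    have : Nontrivial (Verma k j Δ) := nontrivial_of_ne _ _ (by
      simpa using linearIndependent_Gm_pow_hwv (k := k) (j := j) (Δ := Δ) |>.ne_zero 0)
    refine { eq_bot_or_eq_top := fun W => or_iff_not_imp_left.mpr fun hW => ?_ }
    obtain ⟨x, hxW, hx⟩ := Submodule.exists_mem_ne_zero_of_ne_bot hW
    obtain ⟨c, rfl⟩ := exists_linearCombination_Gm_pow_hwv x
    obtain ⟨n, hn⟩ := Finsupp.support_nonempty_iff.mpr
      (show c ≠ 0 from fun hc => hx (by rw [hc, map_zero]))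
    exact eq_top_of_hwv_mem (isHighestWeightVector_hwv.mem_of_Gm_pow_smul_mem W
      (isHighestWeightVector_hwv.Gm_pow_smul_mem_of_linearCombination_mem W hxW
        (Finsupp.mem_support_iff.mp hn)) fun m h1 _ => H m h1)

lemma injective_vermaLift_Gm_pow_smul_hwv {N : ℕ} (hN : hC k N j Δ = 0) :
    Function.Injective (vermaLift (isHighestWeightVector_hwv.Gm_pow_smul hN)) := by
  set f := vermaLift (isHighestWeightVector_hwv (k := k) (j := j) (Δ := Δ) |>.Gm_pow_smul hN)
  refine LinearMap.injective_of_linearIndependent (f := f.restrictScalars ℂ) span_Gm_pow_hwv ?_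
  have h : f.restrictScalars ℂ ∘ (fun n : ℕ => Gm k ^ n • hwv k (j - N) Δ) =
      (fun n => Gm k ^ n • hwv k j Δ) ∘ (· + N) := by
    funext n
    simp only [f, Function.comp_apply, LinearMap.restrictScalars_apply, vermaLift_smul_hwv,
      ← mul_smul, ← pow_add]
  rw [h]
  exact linearIndependent_Gm_pow_hwv.comp _ (add_left_injective N)

def spanGmPowHwvEquiv {N : ℕ} (hN : hC k N j Δ = 0) :
    Submodule.span (A k) {Gm k ^ N • hwv k j Δ} ≃ₗ[A k] Verma k (j - N) Δ :=
  ((LinearEquiv.ofInjective _ (injective_vermaLift_Gm_pow_smul_hwv hN)).trans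
    (LinearEquiv.ofEq _ _ (range_vermaLift _))).symm

theorem rank_quotient_span_Gm_pow_hwv {N : ℕ} (hN : hC k N j Δ = 0) :
    Module.rank ℂ (Verma k j Δ ⧸ Submodule.span (A k) {Gm k ^ N • hwv k j Δ}) = N := by
  have hcompl : IsCompl (Submodule.span ℂ ((fun n => Gm k ^ n • hwv k j Δ) '' Set.Ici N))
      (Submodule.span ℂ ((fun n => Gm k ^ n • hwv k j Δ) '' Set.Iio N)) :=
    linearIndependent_Gm_pow_hwv.isCompl_span_image span_Gm_pow_hwv
      (by rw [← Set.compl_Ici]; exact isCompl_compl)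
  rw [← (Submodule.Quotient.restrictScalarsEquiv ℂ _).rank_eq,
    restrictScalars_span_Gm_pow_hwv hN, (Submodule.quotientEquivOfIsCompl _ _ hcompl).rank_eq,
    rank_span_set ((linearIndependent_Gm_pow_hwv.linearIndepOn _).id_image),
    Cardinal.mk_image_eq linearIndependent_Gm_pow_hwv.injective]
  simp

end Structure

lemma rankOverC_eq_rank {k : ℂ} (M : Type) [AddCommGroup M] [Module ℂ M] [Module (A k) M]
    [IsScalarTower ℂ (A k) M] : rankOverC k M = Module.rank ℂ M := by
  have h : Module.compHom M (algebraMap ℂ (A k)) = ‹Module ℂ M› :=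
    Module.ext' _ _ fun c x => algebraMap_smul (A k) c x
  rw [rankOverC, h]

/-- the Verma module `V_{j,Δ}` is simple iff `h_k^n(j,Δ) ≠ 0` for all
integers `n ≥ 1`; and if `N ≥ 1` is minimal with `h_k^N(j,Δ) = 0`, then the submodule
generated by `(G⁻)^N v` is isomorphic to `V_{j−N,Δ}`, it is the unique maximal proper
submodule, and the simple quotient `L_{j,Δ}` has dimension `N` over `ℂ`. -/
theorem verma_simplicity (k j Δ : ℂ) :
    (IsSimpleModule (A k) (Verma k j Δ) ↔ ∀ n : ℕ, 1 ≤ n → hC k n j Δ ≠ 0) ∧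
    (∀ N : ℕ, 1 ≤ N → hC k N j Δ = 0 → (∀ n : ℕ, 1 ≤ n → n < N → hC k n j Δ ≠ 0) →
      Nonempty
        ((Submodule.span (A k) {Gm k ^ N • hwv k j Δ} : Submodule (A k) (Verma k j Δ))
          ≃ₗ[A k] Verma k (j - N) Δ) ∧
      (Submodule.span (A k) {Gm k ^ N • hwv k j Δ} : Submodule (A k) (Verma k j Δ)) ≠ ⊤ ∧
      (∀ W : Submodule (A k) (Verma k j Δ), W ≠ ⊤ →
        W ≤ Submodule.span (A k) {Gm k ^ N • hwv k j Δ}) ∧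
      rankOverC k (Verma k j Δ ⧸
        (Submodule.span (A k) {Gm k ^ N • hwv k j Δ} : Submodule (A k) (Verma k j Δ))) = N) :=
  ⟨isSimpleModule_verma_iff, fun _N hN1 hN hmin =>
    ⟨⟨spanGmPowHwvEquiv hN⟩, span_Gm_pow_hwv_ne_top hN1 hN,
      fun _W hW => le_span_Gm_pow_hwv hN hmin hW,
      (rankOverC_eq_rank _).trans (rank_quotient_span_Gm_pow_hwv hN)⟩⟩

end BP
end
end

section
/- Let u, v ≥ 3 be coprime integers and k = −3 + u/v. For λ ∈ Γ_{u,v}, define μ by μ^I = (λ^I_0, λ^I_2, λ^I_1) and μ^F = (λ^F_0, λ^F_2 + 1, λ^F_1 − 1). Then μ ∈ Γ_{u,v}, and moreover j^tw(μ) = −j^tw(λ) − 1 and Δ^tw(μ) = Δ^tw(λ). -/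
namespace BPW

/-- A triple of natural numbers `(a₀, a₁, a₂)` (the Dynkin labels of a dominant
integral `sl₃` weight). -/
abbrev Triple : Type := ℕ × ℕ × ℕ

/-- A weight `λ = (λ^I, λ^F)` consisting of an integral part and a fractional part. -/
abbrev Wt : Type := Triple × Triple

/-- The sum `a₀ + a₁ + a₂` of the entries of a triple. -/
def sumT (a : Triple) : ℕ := a.1 + a.2.1 + a.2.2

/-- `λ = (λ^I, λ^F)` is a *surviving weight* if `λ^I ∈ P^{u−3}`, `λ^F ∈ P^{v−1}`
and `λ^F₀ ≥ 1`. -/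
def Surviving (u v : ℕ) (w : Wt) : Prop :=
  sumT w.1 = u - 3 ∧ sumT w.2 = v - 1 ∧ 1 ≤ w.2.1

/-- `λ ∈ Γ_{u,v}` iff `λ` is surviving and `λ^F₁ ≥ 1`. -/
def InGamma (u v : ℕ) (w : Wt) : Prop :=
  Surviving u v w ∧ 1 ≤ w.2.2.1

/-- The level `k = −3 + u/v`. -/
def kQ (u v : ℕ) : ℚ := -3 + (u : ℚ) / (v : ℚ)

/-- The Dynkin label `λ₁ = λ^I₁ − (u/v)·λ^F₁`. -/
def dyn1 (u v : ℕ) (w : Wt) : ℚ := (w.1.2.1 : ℚ) - (u : ℚ) / (v : ℚ) * (w.2.2.1 : ℚ)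

/-- The Dynkin label `λ₂ = λ^I₂ − (u/v)·λ^F₂`. -/
def dyn2 (u v : ℕ) (w : Wt) : ℚ := (w.1.2.2 : ℚ) - (u : ℚ) / (v : ℚ) * (w.2.2.2 : ℚ)

/-- The charge `j(λ) = (λ₁ − λ₂)/3`. -/
def jwt (u v : ℕ) (w : Wt) : ℚ := (dyn1 u v w - dyn2 u v w) / 3

/-- The conformal weight
`Δ(λ) = [(λ₁−λ₂)² − 3(λ₁+λ₂)(2(k+1)−λ₁−λ₂)]/(12(k+3))`. -/
def Dwt (u v : ℕ) (w : Wt) : ℚ :=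
  ((dyn1 u v w - dyn2 u v w) ^ 2
      - 3 * (dyn1 u v w + dyn2 u v w) * (2 * (kQ u v + 1) - dyn1 u v w - dyn2 u v w))
    / (12 * (kQ u v + 3))

/-- The twisted charge `j^tw(λ) = (λ₁ − λ₂)/3 + (2k+3)/6`. -/
def jtw (u v : ℕ) (w : Wt) : ℚ := jwt u v w + (2 * kQ u v + 3) / 6

/-- The twisted conformal weight `Δ^tw(λ) = Δ(λ) + (λ₁ − λ₂)/6 + (2k+3)/24`. -/
def Dtw (u v : ℕ) (w : Wt) : ℚ :=
  Dwt u v w + (dyn1 u v w - dyn2 u v w) / 6 + (2 * kQ u v + 3) / 24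

/-- `ω(λ) = −(2/27)(λ₁−λ₂+k+3)(2λ₁+λ₂−k)(λ₁+2λ₂−2k−3)`. -/
def omg (u v : ℕ) (w : Wt) : ℚ :=
  -(2/27) * (dyn1 u v w - dyn2 u v w + kQ u v + 3)
    * (2 * dyn1 u v w + dyn2 u v w - kQ u v)
    * (dyn1 u v w + 2 * dyn2 u v w - 2 * kQ u v - 3)

/-- The map `λ ↦ μ` with `μ^I = (λ^I₀, λ^I₂, λ^I₁)` and
`μ^F = (λ^F₀, λ^F₂ + 1, λ^F₁ − 1)`. -/
def mu17 (w : Wt) : Wt :=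
  ((w.1.1, w.1.2.2, w.1.2.1), (w.2.1, w.2.2.2 + 1, w.2.2.1 - 1))

/-!
On Dynkin labels `μ` acts by `(λ₁, λ₂) ↦ (λ₂ − (k+3), λ₁ + (k+3))`: moving `λ^F` by
`(0, 1, −1)` shifts the labels by `∓u/v = ∓(k+3)`. The statements about `j^tw` and `Δ^tw`
are then rational-function identities in `λ₁, λ₂, k`. Membership in `Γ_{u,v}` is bookkeeping:
swapping `λ^I₁, λ^I₂` keeps `|λ^I|`, and `λ^F₁ ≥ 1` makes `λ^F₁ − 1` an honest subtraction, so
`|λ^F|` is kept as well.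
-/

theorem kQ_add_three (u v : ℕ) : kQ u v + 3 = u / v := by
  rw [kQ]; ring

theorem sumT_mu17_fst (w : Wt) : sumT (mu17 w).1 = sumT w.1 := by
  simp only [mu17, sumT]; omega

theorem sumT_mu17_snd {w : Wt} (h : 1 ≤ w.2.2.1) : sumT (mu17 w).2 = sumT w.2 := by
  simp only [mu17, sumT]; omega

theorem InGamma.mu17 {u v : ℕ} {w : Wt} (hw : InGamma u v w) : InGamma u v (mu17 w) := by
  obtain ⟨⟨hI, hF, h0⟩, h1⟩ := hw
  exact ⟨⟨(sumT_mu17_fst w).trans hI, (sumT_mu17_snd h1).trans hF, h0⟩, Nat.le_add_left 1 _⟩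

theorem dyn1_mu17 (u v : ℕ) (w : Wt) : dyn1 u v (mu17 w) = dyn2 u v w - (kQ u v + 3) := by
  rw [kQ_add_three, dyn1, dyn2, mu17]
  push_cast
  ring

theorem dyn2_mu17 (u v : ℕ) {w : Wt} (h : 1 ≤ w.2.2.1) :
    dyn2 u v (mu17 w) = dyn1 u v w + (kQ u v + 3) := by
  rw [kQ_add_three, dyn1, dyn2, mu17, Nat.cast_sub h]
  push_cast
  ring

theorem jtw_mu17 (u v : ℕ) {w : Wt} (h : 1 ≤ w.2.2.1) :
    jtw u v (mu17 w) = -jtw u v w - 1 := by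
  simp only [jtw, jwt, dyn1_mu17, dyn2_mu17 u v h]
  ring

theorem Dtw_mu17 {u v : ℕ} (hk : kQ u v + 3 ≠ 0) {w : Wt} (h : 1 ≤ w.2.2.1) :
    Dtw u v (mu17 w) = Dtw u v w := by
  simp only [Dtw, Dwt, dyn1_mu17, dyn2_mu17 u v h]
  generalize dyn1 u v w = a, dyn2 u v w = b, kQ u v = k at *
  field_simp
  ring

theorem mu17_in_Gamma_general (u v : ℕ) (hu : 3 ≤ u) (hv : 3 ≤ v)
    (w : Wt) (hw : InGamma u v w) :
    InGamma u v (mu17 w) ∧ jtw u v (mu17 w) = -jtw u v w - 1 ∧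
    Dtw u v (mu17 w) = Dtw u v w := by
  have hk : kQ u v + 3 ≠ 0 := by
    rw [kQ_add_three]
    have : 0 < u := by omega
    have : 0 < v := by omega
    positivity
  exact ⟨hw.mu17, jtw_mu17 u v hw.2, Dtw_mu17 hk hw.2⟩

/-- for `λ ∈ Γ_{u,v}`, the weight `μ` with `μ^I = (λ^I₀, λ^I₂, λ^I₁)`
and `μ^F = (λ^F₀, λ^F₂+1, λ^F₁−1)` lies in `Γ_{u,v}`, with `j^tw(μ) = −j^tw(λ) − 1` and
`Δ^tw(μ) = Δ^tw(λ)`. -/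
theorem mu17_in_Gamma (u v : ℕ) (hu : 3 ≤ u) (hv : 3 ≤ v) (hcop : Nat.Coprime u v)
    (w : Wt) (hw : InGamma u v w) :
    InGamma u v (mu17 w) ∧ jtw u v (mu17 w) = -jtw u v w - 1 ∧
    Dtw u v (mu17 w) = Dtw u v w :=
  mu17_in_Gamma_general u v hu hv w hw

end BPW
end
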